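/- Let H be a connected multigraph with at least one edge and let G′ be any subdivision of G*. Then pack_{H⁺}(G*) = pack_{H⁺}(G′) and cover_{H⁺}(G*) = cover_{H⁺}(G′). -/

import Mathlib

open scoped Classical

/-- A finite loopless multigraph: `E` indexes edges, `ends e` gives the endpoints. -/
structure Multigraph (V : Type) (E : Type) where
  ends : E → Sym2 V
  loopless : ∀ e, ¬ (ends e).IsDiag

namespace Multigraph

variable {V E V1 E1 V2 E2 : Type}

/-- Multidegree: number of edges (with multiplicity) incident with `v`. -/
noncomputable def mdeg (G : Multigraph V E) [Fintype E] (v : V) : ℕ :=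
  (Finset.univ.filter (fun e => v ∈ G.ends e)).card

/-- Walks in a multigraph, remembering which edge instance is used at each step. -/
inductive Walk (G : Multigraph V E) : V → V → Type where
  | nil (v : V) : Walk G v v
  | cons {u v w : V} (e : E) (he : G.ends e = s(u, v)) (p : Walk G v w) : Walk G u w

namespace Walk

variable {G : Multigraph V E}

def support : {u v : V} → G.Walk u v → List V
  | u, _, .nil _ => [u]
  | u, _, .cons _ _ p => u :: p.support

def edges : {u v : V} → G.Walk u v → List E
  | _, _, .nil _ => []
  | _, _, .cons e _ p => e :: p.edges

/-- A walk is a path when its vertices are pairwise distinct. -/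
def IsPath {u v : V} (p : G.Walk u v) : Prop := p.support.Nodup

/-- The internal vertices of a walk (all vertices except the two endpoints). -/
def interior {u v : V} (p : G.Walk u v) : List V := p.support.tail.dropLast

end Walk

/-- An `H`-immersion model in `G`. -/
structure ImmersionModel (H : Multigraph V1 E1) (G : Multigraph V E) where
  vmap : V1 → V
  vmap_inj : Function.Injective vmap
  src : E1 → V1
  tgt : E1 → V1
  ends_eq : ∀ e, H.ends e = s(src e, tgt e)
  path : ∀ e, G.Walk (vmap (src e)) (vmap (tgt e))
  path_isPath : ∀ e, (path e).IsPath
  edge_disjoint : ∀ e₁ e₂, e₁ ≠ e₂ → ∀ x, x ∈ (path e₁).edges → x ∉ (path e₂).edges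

namespace ImmersionModel

variable {H : Multigraph V1 E1} {G : Multigraph V E}

/-- The edges of the immersion expansion associated with the model. -/
def edgeSet (m : ImmersionModel H G) : Set E := {x | ∃ e, x ∈ (m.path e).edges}

/-- The vertices of the immersion expansion associated with the model. -/
def vertSet (m : ImmersionModel H G) : Set V :=
  {x | (∃ a, m.vmap a = x) ∨ ∃ e, x ∈ (m.path e).support}

end ImmersionModel

/-- `G` contains `H` as an immersion. -/
def Immersed (H : Multigraph V1 E1) (G : Multigraph V E) : Prop :=
  Nonempty (ImmersionModel H G)

/-- Deleting a set of edges from a multigraph. -/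
def deleteEdges (G : Multigraph V E) (F : Set E) : Multigraph V {e : E // e ∉ F} where
  ends e := G.ends e.1
  loopless e := G.loopless e.1

/-- The minimum size of an `H`-cover of `G`: a set of edges meeting every
`H`-immersion expansion. (By convention `sInf ∅ = 0`.) -/
noncomputable def coverNum (H : Multigraph V1 E1) (G : Multigraph V E) : ℕ :=
  sInf {n | ∃ C : Finset E, ¬ Immersed H (G.deleteEdges ↑C) ∧ C.card = n}

/-- The maximum size of an `H`-packing in `G`: a collection of pairwise
edge-disjoint `H`-immersion expansions. -/
noncomputable def packNum (H : Multigraph V1 E1) (G : Multigraph V E) : ℕ :=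
  sSup {n | ∃ f : Fin n → ImmersionModel H G,
    ∀ i j, i ≠ j → Disjoint (f i).edgeSet (f j).edgeSet}

/-- Connectivity of a multigraph. -/
def Connected (G : Multigraph V E) : Prop :=
  Nonempty V ∧ ∀ u v : V, Nonempty (G.Walk u v)

/-- Reachability in `G` avoiding the vertex set `X`. -/
def ReachAvoid (G : Multigraph V E) (X : Set V) (u v : V) : Prop :=
  ∃ p : G.Walk u v, ∀ x ∈ p.support, x ∉ X

/-- The underlying simple graph of a multigraph. -/
def toSimple (G : Multigraph V E) : SimpleGraph V where
  Adj u v := u ≠ v ∧ ∃ e, G.ends e = s(u, v)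
  symm := ⟨by
    rintro u v ⟨h, e, he⟩
    exact ⟨h.symm, e, by rw [he, Sym2.eq_swap]⟩⟩
  loopless := ⟨fun v h => h.1 rfl⟩

end Multigraph

section Minor

/-- `A` is a minor of `B` (branch-set/minor-model definition). -/
def SimpleGraphMinorOf {α β : Type} (A : SimpleGraph α) (B : SimpleGraph β) : Prop :=
  ∃ C : α → Set β,
    (∀ a, (C a).Nonempty) ∧
    (∀ a, (B.induce (C a)).Connected) ∧
    (Pairwise fun a a' => Disjoint (C a) (C a')) ∧
    (∀ a a', A.Adj a a' → ∃ x ∈ C a, ∃ y ∈ C a', B.Adj x y)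

end Minor

namespace Multigraph

variable {V E : Type}

/-- Planarity of a loopless multigraph, via Wagner's theorem: no `K₅` and
no `K₃,₃` minor in the underlying simple graph. -/
def Planar (G : Multigraph V E) : Prop :=
  ¬ SimpleGraphMinorOf (SimpleGraph.completeGraph (Fin 5)) G.toSimple ∧
  ¬ SimpleGraphMinorOf (completeBipartiteGraph (Fin 3) (Fin 3)) G.toSimple

lemma isDiag_map_inl {α β : Type} (p : Sym2 α) :
    (p.map (Sum.inl : α → α ⊕ β)).IsDiag ↔ p.IsDiag := by
  induction p using Sym2.ind with
  | _ a b => simp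

/-- `G⁺`: attach to every vertex `v` a gadget of two new vertices `(v,false)`,
`(v,true)` joined by a double edge, each joined to `v` by a single edge. -/
def plus (G : Multigraph V E) :
    Multigraph (V ⊕ (V × Bool)) (E ⊕ ((V × Fin 2) ⊕ (V × Bool))) where
  ends
    | .inl e => (G.ends e).map .inl
    | .inr (.inl (v, _)) => s(.inr (v, false), .inr (v, true))
    | .inr (.inr (v, b)) => s(.inl v, .inr (v, b))
  loopless := by
    rintro (e | ⟨v, i⟩ | ⟨v, b⟩) h
    · exact G.loopless e ((isDiag_map_inl _).1 h)
    · simp at h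
    · simp at h

/-- `G*`: attach, at every vertex `v` and for every `i ∈ {1,…,mdeg v}`, a gadget of two
new vertices joined by a double edge, each joined to `v` by a single edge. -/
noncomputable def star (G : Multigraph V E) [Fintype E] :
    Multigraph (V ⊕ ((Σ v : V, Fin (G.mdeg v)) × Bool))
      (E ⊕ (((Σ v : V, Fin (G.mdeg v)) × Fin 2) ⊕ ((Σ v : V, Fin (G.mdeg v)) × Bool))) where
  ends
    | .inl e => (G.ends e).map .inl
    | .inr (.inl (p, _)) => s(.inr (p, false), .inr (p, true))
    | .inr (.inr (p, b)) => s(.inl p.1, .inr (p, b))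
  loopless := by
    rintro (e | ⟨p, i⟩ | ⟨p, b⟩) h
    · exact G.loopless e ((isDiag_map_inl _).1 h)
    · simp at h
    · simp at h

/-- The subdivision of `G` in which the edge `e` (oriented from `src e` to `tgt e`)
is subdivided `n e` times, i.e. replaced by a path with `n e` internal vertices. -/
def subdivide (G : Multigraph V E) (src tgt : E → V)
    (hst : ∀ e, G.ends e = s(src e, tgt e)) (n : E → ℕ) :
    Multigraph (V ⊕ (Σ e : E, Fin (n e))) (Σ e : E, Fin (n e + 1)) where
  ends := fun q =>
    s(if _ : q.2.val = 0 then Sum.inl (src q.1)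
        else Sum.inr ⟨q.1, ⟨q.2.val - 1, by have := q.2.isLt; omega⟩⟩,
      if _ : q.2.val = n q.1 then Sum.inl (tgt q.1)
        else Sum.inr ⟨q.1, ⟨q.2.val, by have := q.2.isLt; omega⟩⟩)
  loopless := by
    rintro ⟨e, i⟩ h
    rw [Sym2.mk_isDiag_iff] at h
    split_ifs at h with h1 h2 h2 <;>
      first
        | exact Sum.noConfusion h
        | (have hl := G.loopless e
           rw [hst e, Sym2.mk_isDiag_iff] at hl
           exact hl (Sum.inl.inj h))
        | (have h3 := Sum.inr.inj h
           simp at h1 h3 <;> exact h1 (Fin.ext (by rw [Fin.val_zero]; omega)))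

end Multigraph

namespace Multigraph

/-- The multigraph underlying a simple graph. -/
def ofSimple {α : Type} (S : SimpleGraph α) : Multigraph α S.edgeSet where
  ends e := e.1
  loopless e := S.not_isDiag_of_mem_edgeSet e.2

/-- A strong immersion model: additionally, no branch vertex is an internal
vertex of a certifying path. -/
structure StrongImmersionModel {V1 E1 V E : Type} (H : Multigraph V1 E1) (G : Multigraph V E)
    extends ImmersionModel H G where
  not_internal : ∀ (e : E1) (x : V1), vmap x ∉ (path e).interior

/-- An `H`-topological-minor model in `G`: certifying paths are internally
vertex-disjoint and their internal vertices avoid the branch vertices. -/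
structure TopMinorModel {V1 E1 V E : Type} (H : Multigraph V1 E1) (G : Multigraph V E) where
  vmap : V1 → V
  vmap_inj : Function.Injective vmap
  src : E1 → V1
  tgt : E1 → V1
  ends_eq : ∀ e, H.ends e = s(src e, tgt e)
  path : ∀ e, G.Walk (vmap (src e)) (vmap (tgt e))
  path_isPath : ∀ e, (path e).IsPath
  internal_disjoint : ∀ e₁ e₂, e₁ ≠ e₂ → ∀ x, x ∈ (path e₁).interior → x ∉ (path e₂).support
  internal_avoid : ∀ (e : E1) (x : V1), vmap x ∉ (path e).interior

end Multigraph

section Walls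

/-- The `m × n` grid graph. -/
def gridGraph (m n : ℕ) : SimpleGraph (Fin m × Fin n) where
  Adj p q := (p.1 = q.1 ∧ (p.2.val + 1 = q.2.val ∨ q.2.val + 1 = p.2.val)) ∨
             (p.2 = q.2 ∧ (p.1.val + 1 = q.1.val ∨ q.1.val + 1 = p.1.val))
  symm := ⟨by rintro p q (⟨h, h'⟩ | ⟨h, h'⟩) <;> [left; right] <;> exact ⟨h.symm, h'.symm⟩⟩
  loopless := ⟨by rintro p (⟨-, h | h⟩ | ⟨-, h | h⟩) <;> omega⟩

/-- The `k×k` grid `Γ_k` as a multigraph. -/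
def Gamma (k : ℕ) : Multigraph (Fin k × Fin k) (gridGraph k k).edgeSet :=
  Multigraph.ofSimple (gridGraph k k)

/-- The `(k+1) × (2k+2)` grid with the vertical edges `{(x,y),(x+1,y)}` with `x+y` odd
(in 1-indexed coordinates) removed. -/
def wallPre (k : ℕ) : SimpleGraph (Fin (k + 1) × Fin (2 * k + 2)) where
  Adj p q := (gridGraph (k + 1) (2 * k + 2)).Adj p q ∧
    ¬ (p.2 = q.2 ∧ (min p.1.val q.1.val + p.2.val) % 2 = 1)
  symm := ⟨by
    rintro p q ⟨h, h'⟩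
    refine ⟨(gridGraph _ _).adj_symm h, fun ⟨hc, hp⟩ => h' ⟨hc.symm, ?_⟩⟩
    rw [Nat.min_comm] at hp
    rw [← hc]
    exact hp⟩
  loopless := ⟨fun p h => (gridGraph _ _).irrefl h.1⟩

/-- Degree of a vertex in `wallPre k`. -/
noncomputable def wallPreDeg (k : ℕ) (v : Fin (k + 1) × Fin (2 * k + 2)) : ℕ :=
  (Finset.univ.filter (fun w => (wallPre k).Adj v w)).card

/-- The vertex set of the `k`-wall: vertices of degree `≠ 1`. -/
def wallVerts (k : ℕ) : Set (Fin (k + 1) × Fin (2 * k + 2)) :=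
  {v | wallPreDeg k v ≠ 1}

/-- The `k`-wall `W_k`, as a simple graph. -/
noncomputable def wallSimple (k : ℕ) : SimpleGraph (wallVerts k) :=
  (wallPre k).induce (wallVerts k)

/-- The `k`-wall `W_k`, as a multigraph. -/
noncomputable def Wall (k : ℕ) : Multigraph (wallVerts k) (wallSimple k).edgeSet :=
  Multigraph.ofSimple (wallSimple k)

/-- The doubled edges of `W⁺_k`: the horizontal edges lying on both a vertical and a
horizontal path of the wall, i.e. those whose lower column index is odd (1-indexed). -/
def isDoubledEdge (k : ℕ) (p : Sym2 (wallVerts k)) : Prop :=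
  ∃ a b : wallVerts k, p = s(a, b) ∧ (a : Fin (k + 1) × Fin (2 * k + 2)).1 = (b : Fin (k + 1) × Fin (2 * k + 2)).1 ∧
    (b : Fin (k + 1) × Fin (2 * k + 2)).2.val = (a : Fin (k + 1) × Fin (2 * k + 2)).2.val + 1 ∧
    (a : Fin (k + 1) × Fin (2 * k + 2)).2.val % 2 = 0

/-- `W⁺_k`: the `k`-wall with a second parallel copy of every doubled edge. -/
noncomputable def WallPlus (k : ℕ) :
    Multigraph (wallVerts k)
      ((wallSimple k).edgeSet ⊕ {p : Sym2 (wallVerts k) // p ∈ (wallSimple k).edgeSet ∧ isDoubledEdge k p}) where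
  ends
    | .inl e => e.1
    | .inr e => e.1
  loopless := by
    rintro (e | e)
    · exact (wallSimple k).not_isDiag_of_mem_edgeSet e.2
    · exact (wallSimple k).not_isDiag_of_mem_edgeSet e.2.1

end Walls

namespace Multigraph

variable {V E : Type}

/-- Tree-partition width of a multigraph (bags may be empty; w.l.o.g. bags are
indexed by the vertices themselves). -/
noncomputable def tpw (G : Multigraph V E) [Fintype V] [Fintype E] : ℕ :=
  sInf {w | ∃ T : SimpleGraph V, T.IsTree ∧ ∃ bag : V → V,
    (Fintype.card V = 1 ∨
      ∀ (e : E) (a b : V), G.ends e = s(a, b) → bag a = bag b ∨ T.Adj (bag a) (bag b)) ∧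
    (∀ t : V, (Finset.univ.filter (fun v => bag v = t)).card ≤ w) ∧
    (∀ t t' : V, T.Adj t t' →
      (Finset.univ.filter (fun e : E =>
        ∃ a b, G.ends e = s(a, b) ∧ bag a = t ∧ bag b = t')).card ≤ w)}

section ThreeCenter

variable {W : Type} [Fintype W]

/-- Degree of `v` in the state `(A, m)`: `A` is the set of remaining vertices and
`m` gives edge multiplicities. -/
noncomputable def stDeg (A : Finset W) (m : Sym2 W → ℕ) (v : W) : ℕ :=
  ∑ w ∈ A.erase v, m s(v, w)

/-- One reduction step of the 3-center construction relative to the marked set `X`: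
delete a vertex of degree one, or suppress (dissolve) a vertex of degree two not in `X`. -/
inductive CStep (X : Set W) :
    Finset W × (Sym2 W → ℕ) → Finset W × (Sym2 W → ℕ) → Prop
  | delete (A : Finset W) (m : Sym2 W → ℕ) (v : W) (hv : v ∈ A) (hd : stDeg A m v = 1) :
      CStep X (A, m) (A.erase v, fun p => if v ∈ p then 0 else m p)
  | suppress (A : Finset W) (m : Sym2 W → ℕ) (v a b : W) (hv : v ∈ A) (hx : v ∉ X)
      (ha : a ∈ A) (hb : b ∈ A) (hav : a ≠ v) (hbv : b ≠ v) (hd : stDeg A m v = 2)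
      (h1 : 1 ≤ m s(v, a)) (h2 : a = b → m s(v, a) = 2) (h3 : a ≠ b → 1 ≤ m s(v, b)) :
      CStep X (A, m) (A.erase v,
        fun p => if v ∈ p then 0 else if a ≠ b ∧ p = s(a, b) then m p + 1 else m p)

/-- The number of vertices of the 3-center of the marked multigraph given by the
state `(A, m)` with marked set `X`: the size of a reduct on which no step applies. -/
noncomputable def centerSize (X : Set W) (A : Finset W) (m : Sym2 W → ℕ) : ℕ :=
  sInf {c | ∃ s : Finset W × (Sym2 W → ℕ),
    Relation.ReflTransGen (CStep X) (A, m) s ∧ (∀ s', ¬ CStep X s s') ∧ s.1.card = c}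

end ThreeCenter

section TCW

variable {n : ℕ}

/-- The consolidation map for the torso at node `t` of a tree-cut decomposition:
a vertex whose bag is `t` is kept, and any other vertex is sent to the peripheral
vertex indexed by the neighbour `u` of `t` whose branch contains its bag. -/
noncomputable def consMap (T : SimpleGraph (Fin n)) (bag : V → Fin n) (t : Fin n) (a : V) :
    V ⊕ Fin n :=
  if bag a = t then Sum.inl a
  else if h : ∃ u, T.Adj t u ∧ (T.deleteEdges {s(t, u)}).Reachable (bag a) u
    then Sum.inr h.choose else Sum.inl a

/-- The vertex set of the torso at `t`: the bag of `t` together with one peripheral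
vertex for each neighbour of `t` in the decomposition tree. -/
noncomputable def torsoA [Fintype V] (T : SimpleGraph (Fin n)) (bag : V → Fin n) (t : Fin n) :
    Finset (V ⊕ Fin n) :=
  (Finset.univ.filter (fun a : V => bag a = t)).image Sum.inl ∪
    (Finset.univ.filter (fun u : Fin n => T.Adj t u)).image Sum.inr

/-- The edge multiplicities of the torso at `t`. -/
noncomputable def torsoM (G : Multigraph V E) [Fintype E] (T : SimpleGraph (Fin n))
    (bag : V → Fin n) (t : Fin n) : Sym2 (V ⊕ Fin n) → ℕ :=
  fun p => if p.IsDiag then 0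
    else (Finset.univ.filter (fun e : E => (G.ends e).map (consMap T bag t) = p)).card

/-- The adhesion of the tree edge `{t, t'}`: the number of edges of `G` whose endpoints
lie in bags on different sides of the edge. -/
noncomputable def adhE (G : Multigraph V E) [Fintype E] (T : SimpleGraph (Fin n))
    (bag : V → Fin n) (t t' : Fin n) : ℕ :=
  (Finset.univ.filter (fun e : E => ∃ a b, G.ends e = s(a, b) ∧
    (T.deleteEdges {s(t, t')}).Reachable (bag a) t ∧
    (T.deleteEdges {s(t, t')}).Reachable (bag b) t')).card

/-- Tree-cut width of a multigraph: the minimum, over tree-cut decompositions, of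
the maximum of all adhesions and of the numbers of vertices of the 3-centers
of the torsos. -/
noncomputable def tcw (G : Multigraph V E) [Fintype V] [Fintype E] : ℕ :=
  sInf {w | ∃ (n : ℕ) (T : SimpleGraph (Fin n)), T.IsTree ∧ ∃ bag : V → Fin n,
    (∀ t t', T.Adj t t' → adhE G T bag t t' ≤ w) ∧
    (∀ t, centerSize (Sum.inl '' {a | bag a = t}) (torsoA T bag t) (torsoM G T bag t) ≤ w)}

end TCW

end Multigraph

/-!
Every vertex of `H⁺` meets three edges, and this makes `H⁺`-immersions blind to subdivisions.
A model in the original graph expands to one in the subdivision by replacing each edge by its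
path. Conversely, in a model in the subdivision no branch vertex is a subdivision vertex (those
meet only two edges), and a certifying path between original vertices that enters the path
replacing `e` runs through all of it; contracting these paths gives a model in the original graph
that uses `e` only where the given model uses the first segment of `e`. Both correspondences send
edge-disjoint models to edge-disjoint ones and covers to covers of at most the same size.
-/

open Function Relation

namespace Multigraph

variable {V1 E1 V E W F : Type}

def AdjVia (G : Multigraph V E) (S : Set E) (u v : V) : Prop :=
  ∃ e ∈ S, G.ends e = s(u, v)

instance {G : Multigraph V E} {S : Set E} : Std.Symm (G.AdjVia S) :=
  ⟨fun _ _ ⟨e, he, h⟩ => ⟨e, he, h.trans Sym2.eq_swap⟩⟩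

def HasThreeEdgesAt (G : Multigraph V E) (v : V) : Prop :=
  ∃ e₁ e₂ e₃ : E, e₁ ≠ e₂ ∧ e₁ ≠ e₃ ∧ e₂ ≠ e₃ ∧
    v ∈ G.ends e₁ ∧ v ∈ G.ends e₂ ∧ v ∈ G.ends e₃

namespace Walk

variable {G : Multigraph V E}

lemma start_mem_support {u v : V} : (p : G.Walk u v) → u ∈ p.support
  | .nil _ => List.mem_singleton_self _
  | .cons _ _ _ => List.mem_cons_self

lemma mem_support_of_mem_ends {u v : V} (p : G.Walk u v) {e : E} (he : e ∈ p.edges) {x : V}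
    (hx : x ∈ G.ends e) : x ∈ p.support := by
  induction p with
  | nil => cases he
  | cons f hf p ih =>
    rcases List.mem_cons.1 he with rfl | he
    · rw [hf, Sym2.mem_iff] at hx
      rcases hx with rfl | rfl
      · exact List.mem_cons_self
      · exact List.mem_cons_of_mem _ p.start_mem_support
    · exact List.mem_cons_of_mem _ (ih he)

lemma exists_edge_start {u v : V} (p : G.Walk u v) (h : u ≠ v) :
    ∃ e ∈ p.edges, u ∈ G.ends e := by
  cases p with
  | nil => exact absurd rfl h
  | cons e he _ => exact ⟨e, List.mem_cons_self, he ▸ Sym2.mem_mk_left _ _⟩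

lemma exists_edge_end {u v : V} (p : G.Walk u v) (h : u ≠ v) :
    ∃ e ∈ p.edges, v ∈ G.ends e := by
  induction p with
  | nil => exact absurd rfl h
  | @cons _ w v e he p ih =>
    by_cases hw : w = v
    · subst hw
      exact ⟨e, List.mem_cons_self, he ▸ Sym2.mem_mk_right _ _⟩
    · obtain ⟨f, hf, hvf⟩ := ih hw
      exact ⟨f, List.mem_cons_of_mem _ hf, hvf⟩

lemma reflTransGen_adjVia {S : Set E} {u v : V} (p : G.Walk u v) (hS : ∀ e ∈ p.edges, e ∈ S) :
    ReflTransGen (G.AdjVia S) u v := by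
  induction p with
  | nil => exact .refl
  | cons e he p ih =>
    exact .head ⟨e, hS e List.mem_cons_self, he⟩ (ih fun f hf => hS f (List.mem_cons_of_mem _ hf))

lemma exists_isPath_suffix {u v w : V} (p : G.Walk v w) (hp : p.IsPath) (hu : u ∈ p.support) :
    ∃ q : G.Walk u w, q.IsPath ∧ ∀ e ∈ q.edges, e ∈ p.edges := by
  induction p with
  | nil =>
    obtain rfl := List.mem_singleton.1 hu
    exact ⟨.nil _, hp, fun _ => id⟩
  | @cons x _ _ e he p ih =>
    by_cases huv : u = x
    · subst huv
      exact ⟨.cons e he p, hp, fun _ => id⟩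
    · obtain ⟨q, hq, hqp⟩ := ih (List.nodup_cons.1 hp).2 ((List.mem_cons.1 hu).resolve_left huv)
      exact ⟨q, hq, fun f hf => List.mem_cons_of_mem _ (hqp f hf)⟩

lemma exists_ne_edges_of_mem_support {u v w : V} (p : G.Walk u v) (hp : p.IsPath)
    (hw : w ∈ p.support) (hwu : w ≠ u) (hwv : w ≠ v) :
    ∃ e₁ ∈ p.edges, ∃ e₂ ∈ p.edges, e₁ ≠ e₂ ∧ w ∈ G.ends e₁ ∧ w ∈ G.ends e₂ := by
  induction p with
  | nil => exact absurd (List.mem_singleton.1 hw) hwu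
  | @cons u x _ e he p ih =>
    obtain ⟨hup, hp⟩ := List.nodup_cons.1 hp
    have hwp : w ∈ p.support := (List.mem_cons.1 hw).resolve_left hwu
    by_cases hwx : w = x
    · subst hwx
      cases p with
      | nil => exact absurd rfl hwv
      | cons f hf p =>
        refine ⟨e, List.mem_cons_self, f, List.mem_cons_of_mem _ List.mem_cons_self, ?_,
          he ▸ Sym2.mem_mk_right _ _, hf ▸ Sym2.mem_mk_left _ _⟩
        rintro rfl
        rw [he, Sym2.eq_iff] at hf
        rcases hf with ⟨rfl, -⟩ | ⟨rfl, -⟩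
        · exact hup List.mem_cons_self
        · exact hup (List.mem_cons_of_mem _ p.start_mem_support)
    · obtain ⟨e₁, h₁, e₂, h₂, hne, hw₁, hw₂⟩ := ih hp hwp hwx hwv
      exact ⟨e₁, List.mem_cons_of_mem _ h₁, e₂, List.mem_cons_of_mem _ h₂, hne, hw₁, hw₂⟩

end Walk

lemma exists_isPath_of_reflTransGen {G : Multigraph V E} {S : Set E} {u v : V}
    (h : ReflTransGen (G.AdjVia S) u v) :
    ∃ p : G.Walk u v, p.IsPath ∧ ∀ e ∈ p.edges, e ∈ S := by
  induction h using ReflTransGen.head_induction_on with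
  | refl => exact ⟨.nil v, List.nodup_singleton _, fun _ h => by cases h⟩
  | @head a b hab _ ih =>
    obtain ⟨e, heS, he⟩ := hab
    obtain ⟨p, hp, hpS⟩ := ih
    by_cases ha : a ∈ p.support
    · obtain ⟨q, hq, hqp⟩ := p.exists_isPath_suffix hp ha
      exact ⟨q, hq, fun f hf => hpS f (hqp f hf)⟩
    · refine ⟨.cons e he p, List.nodup_cons.2 ⟨ha, hp⟩, fun f hf => ?_⟩
      rcases List.mem_cons.1 hf with rfl | hf
      exacts [heS, hpS f hf]

namespace ImmersionModel

variable {H : Multigraph V1 E1} {G : Multigraph V E}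

lemma exists_edge_at_vmap (m : ImmersionModel H G) {f : E1} {x : V1} (hx : x ∈ H.ends f) :
    ∃ e ∈ (m.path f).edges, m.vmap x ∈ G.ends e := by
  have hne : m.vmap (m.src f) ≠ m.vmap (m.tgt f) := fun h =>
    H.loopless f (by rw [m.ends_eq f, m.vmap_inj h]; exact Sym2.mk_isDiag_iff.2 rfl)
  rw [m.ends_eq f, Sym2.mem_iff] at hx
  rcases hx with rfl | rfl
  exacts [(m.path f).exists_edge_start hne, (m.path f).exists_edge_end hne]

lemma disjoint_edges_path (m : ImmersionModel H G) {f₁ f₂ : E1} (hne : f₁ ≠ f₂) :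
    Disjoint {e | e ∈ (m.path f₁).edges} {e | e ∈ (m.path f₂).edges} :=
  Set.disjoint_left.2 fun e h₁ h₂ => m.edge_disjoint f₁ f₂ hne e h₁ h₂

lemma hasThreeEdgesAt_vmap (m : ImmersionModel H G) {x : V1} (hx : H.HasThreeEdgesAt x) :
    G.HasThreeEdgesAt (m.vmap x) := by
  obtain ⟨f₁, f₂, f₃, h₁₂, h₁₃, h₂₃, hx₁, hx₂, hx₃⟩ := hx
  obtain ⟨e₁, he₁, hv₁⟩ := m.exists_edge_at_vmap hx₁
  obtain ⟨e₂, he₂, hv₂⟩ := m.exists_edge_at_vmap hx₂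
  obtain ⟨e₃, he₃, hv₃⟩ := m.exists_edge_at_vmap hx₃
  refine ⟨e₁, e₂, e₃, ?_, ?_, ?_, hv₁, hv₂, hv₃⟩ <;> rintro rfl
  exacts [m.edge_disjoint _ _ h₁₂ _ he₁ he₂, m.edge_disjoint _ _ h₁₃ _ he₁ he₃,
    m.edge_disjoint _ _ h₂₃ _ he₂ he₃]

end ImmersionModel

lemma exists_immersionModel_of_reflTransGen {H : Multigraph V1 E1} {G : Multigraph V E}
    (vmap : V1 → V) (hinj : Injective vmap) (src tgt : E1 → V1)
    (hends : ∀ f, H.ends f = s(src f, tgt f)) (S : E1 → Set E) (hS : Pairwise (Disjoint on S))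
    (hreach : ∀ f, ReflTransGen (G.AdjVia (S f)) (vmap (src f)) (vmap (tgt f))) :
    ∃ m : ImmersionModel H G, m.edgeSet ⊆ ⋃ f, S f := by
  choose p hp hpS using fun f => exists_isPath_of_reflTransGen (hreach f)
  exact ⟨⟨vmap, hinj, src, tgt, hends, p, hp, fun f₁ f₂ hne e h₁ h₂ =>
      Set.disjoint_left.1 (hS hne) (hpS f₁ e h₁) (hpS f₂ e h₂)⟩,
    fun e ⟨f, he⟩ => Set.mem_iUnion.2 ⟨f, hpS f e he⟩⟩

lemma immersed_deleteEdges_iff {H : Multigraph V1 E1} {G : Multigraph V E} {D : Set E} :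
    Immersed H (G.deleteEdges D) ↔ ∃ m : ImmersionModel H G, Disjoint m.edgeSet D := by
  constructor
  · rintro ⟨m⟩
    obtain ⟨m', hm'⟩ := exists_immersionModel_of_reflTransGen m.vmap m.vmap_inj m.src m.tgt
      m.ends_eq (fun f => Subtype.val '' {e | e ∈ (m.path f).edges})
      (fun f₁ f₂ hne => (Set.disjoint_image_iff Subtype.val_injective).2 (m.disjoint_edges_path hne))
      fun f => ((m.path f).reflTransGen_adjVia fun _ => id).lift id
        fun _ _ ⟨e, he, hends⟩ => ⟨e.1, Set.mem_image_of_mem _ he, hends⟩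
    refine ⟨m', Set.disjoint_left.2 fun e he heD => ?_⟩
    obtain ⟨f, e', -, rfl⟩ := Set.mem_iUnion.1 (hm' he)
    exact e'.2 heD
  · rintro ⟨m, hm⟩
    obtain ⟨m', -⟩ := exists_immersionModel_of_reflTransGen (G := G.deleteEdges D) m.vmap
      m.vmap_inj m.src m.tgt m.ends_eq (fun f => Subtype.val ⁻¹' {e | e ∈ (m.path f).edges})
      (fun f₁ f₂ hne => (m.disjoint_edges_path hne).preimage _)
      fun f => ((m.path f).reflTransGen_adjVia fun _ => id).lift id
        fun _ _ ⟨e, he, hends⟩ =>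
          ⟨⟨e, Set.disjoint_left.1 hm ⟨f, he⟩⟩, he, hends⟩
    exact ⟨m'⟩

def ModelsLift (H : Multigraph V1 E1) (A : Multigraph V E) (B : Multigraph W F) (κ : F → E) :
    Prop :=
  ∀ m : ImmersionModel H A, ∃ m' : ImmersionModel H B, m'.edgeSet ⊆ κ ⁻¹' m.edgeSet

namespace ModelsLift

variable {H : Multigraph V1 E1} {A : Multigraph V E} {B : Multigraph W F} {κ : F → E}

lemma exists_packing (h : ModelsLift H A B κ) {k : ℕ} (f : Fin k → ImmersionModel H A)
    (hf : ∀ i j, i ≠ j → Disjoint (f i).edgeSet (f j).edgeSet) :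
    ∃ f' : Fin k → ImmersionModel H B, ∀ i j, i ≠ j → Disjoint (f' i).edgeSet (f' j).edgeSet := by
  choose f' hf' using fun i => h (f i)
  exact ⟨f', fun i j hij => ((hf i j hij).preimage κ).mono (hf' i) (hf' j)⟩

lemma not_immersed_deleteEdges_image (h : ModelsLift H A B κ) {C : Finset F}
    (hC : ¬ Immersed H (B.deleteEdges C)) : ¬ Immersed H (A.deleteEdges (C.image κ)) := by
  rw [immersed_deleteEdges_iff] at hC ⊢
  rintro ⟨m, hm⟩
  obtain ⟨m', hm'⟩ := h m
  refine hC ⟨m', Set.disjoint_left.2 fun e he heC => ?_⟩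
  exact Set.disjoint_left.1 hm (hm' he) (by simpa using ⟨e, heC, rfl⟩)

end ModelsLift

lemma packNum_eq_of_modelsLift {H : Multigraph V1 E1} {A : Multigraph V E} {B : Multigraph W F}
    {κ : F → E} {ι : E → F} (hAB : ModelsLift H A B κ) (hBA : ModelsLift H B A ι) :
    packNum H A = packNum H B := by
  unfold packNum
  congr 1
  ext k
  exact ⟨fun ⟨f, hf⟩ => hAB.exists_packing f hf, fun ⟨f, hf⟩ => hBA.exists_packing f hf⟩

lemma coverNum_eq_of_modelsLift {H : Multigraph V1 E1} {A : Multigraph V E} {B : Multigraph W F}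
    {κ : F → E} {ι : E → F} (hAB : ModelsLift H A B κ) (hBA : ModelsLift H B A ι)
    (hι : Injective ι) : coverNum H A = coverNum H B := by
  have hsub : {k | ∃ C : Finset E, ¬ Immersed H (A.deleteEdges ↑C) ∧ C.card = k} ⊆
      {k | ∃ C : Finset F, ¬ Immersed H (B.deleteEdges ↑C) ∧ C.card = k} :=
    fun _ ⟨C, hC, hk⟩ => ⟨C.image ι, hBA.not_immersed_deleteEdges_image hC,
      (C.card_image_of_injective hι).trans hk⟩
  have hle : ∀ k ∈ {k | ∃ C : Finset F, ¬ Immersed H (B.deleteEdges ↑C) ∧ C.card = k},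
      ∃ k' ∈ {k | ∃ C : Finset E, ¬ Immersed H (A.deleteEdges ↑C) ∧ C.card = k}, k' ≤ k :=
    fun _ ⟨C, hC, hk⟩ => ⟨_, ⟨C.image κ, hAB.not_immersed_deleteEdges_image hC, rfl⟩,
      hk ▸ Finset.card_image_le⟩
  unfold coverNum
  simpa using monotoneOn_id.csInf_eq_of_subset_of_forall_exists_le (OrderBot.bddBelow _) hsub hle

section Subdivision

/-- The `k`-th vertex, `0 ≤ k ≤ n e + 1`, of the path from `src e` to `tgt e` replacing `e`. -/
def subdivVertex (src tgt : E → V) (n : E → ℕ) (e : E) (k : ℕ) : V ⊕ (Σ e : E, Fin (n e)) :=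
  if h₀ : k = 0 then .inl (src e)
  else if h : k ≤ n e then .inr ⟨e, ⟨k - 1, by omega⟩⟩
  else .inl (tgt e)

def contractVertex {n : E → ℕ} (tgt : E → V) : V ⊕ (Σ e : E, Fin (n e)) → V :=
  Sum.elim id fun p => tgt p.1

variable {A : Multigraph V E} {src tgt : E → V} {hst : ∀ e, A.ends e = s(src e, tgt e)}
  {n : E → ℕ}

@[simp] lemma subdivVertex_zero (e : E) : subdivVertex src tgt n e 0 = .inl (src e) := rfl

@[simp] lemma subdivVertex_last (e : E) : subdivVertex src tgt n e (n e + 1) = .inl (tgt e) := by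
  simp [subdivVertex]

@[simp] lemma subdivVertex_succ (e : E) (i : Fin (n e)) :
    subdivVertex src tgt n e (i + 1) = .inr ⟨e, i⟩ := by
  simp [subdivVertex, Nat.succ_le_of_lt i.isLt]

lemma eq_of_subdivVertex_eq_inr {e e' : E} {i : Fin (n e)} {k : ℕ}
    (h : subdivVertex src tgt n e' k = .inr ⟨e, i⟩) : e' = e ∧ k = i + 1 := by
  unfold subdivVertex at h
  split_ifs at h with h₀ hk
  obtain ⟨rfl, hi⟩ := Sigma.mk.inj_iff.1 (Sum.inr.inj h)
  exact ⟨rfl, by have := congrArg Fin.val (eq_of_heq hi); simp at this; omega⟩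

lemma contractVertex_subdivVertex (e : E) (k : ℕ) :
    contractVertex tgt (subdivVertex src tgt n e k) = src e ∨
      contractVertex tgt (subdivVertex src tgt n e k) = tgt e := by
  unfold subdivVertex
  split_ifs <;> simp [contractVertex]

lemma ends_subdivide (e : E) (j : Fin (n e + 1)) :
    (A.subdivide src tgt hst n).ends ⟨e, j⟩ =
      s(subdivVertex src tgt n e j, subdivVertex src tgt n e (j + 1)) := by
  have := j.isLt
  simp only [subdivide, subdivVertex]
  congr 1 <;> split_ifs <;> first | rfl | contradiction | omega

lemma mem_ends_subdivide_inr {e : E} {i : Fin (n e)} {y : Σ e, Fin (n e + 1)} :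
    .inr ⟨e, i⟩ ∈ (A.subdivide src tgt hst n).ends y ↔ y = ⟨e, i.castSucc⟩ ∨ y = ⟨e, i.succ⟩ := by
  constructor
  · obtain ⟨e', j⟩ := y
    rw [ends_subdivide, Sym2.mem_iff]
    rintro (h | h) <;> obtain ⟨rfl, hj⟩ := eq_of_subdivVertex_eq_inr h.symm
    · exact .inr (by simp [Fin.ext_iff, hj])
    · exact .inl (by simp [Fin.ext_iff]; omega)
  · rintro (rfl | rfl) <;> simp [ends_subdivide]

lemma not_hasThreeEdgesAt_subdivide_inr (p : Σ e : E, Fin (n e)) :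
    ¬ (A.subdivide src tgt hst n).HasThreeEdgesAt (.inr p) := by
  rintro ⟨g₁, g₂, g₃, h₁₂, h₁₃, h₂₃, h₁, h₂, h₃⟩
  rw [mem_ends_subdivide_inr] at h₁ h₂ h₃
  rcases h₁ with rfl | rfl <;> rcases h₂ with rfl | rfl <;> rcases h₃ with rfl | rfl <;>
    contradiction

lemma reflTransGen_subdivVertex {S : Set E} {e : E} (he : e ∈ S) {k : ℕ} (hk : k ≤ n e + 1) :
    ReflTransGen ((A.subdivide src tgt hst n).AdjVia (Sigma.fst ⁻¹' S))
      (subdivVertex src tgt n e 0) (subdivVertex src tgt n e k) := by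
  induction k with
  | zero => exact .refl
  | succ k ih => exact (ih (by omega)).tail ⟨⟨e, ⟨k, by omega⟩⟩, he, ends_subdivide e _⟩

lemma reflTransGen_subdivide {S : Set E} {a b : V} (h : ReflTransGen (A.AdjVia S) a b) :
    ReflTransGen ((A.subdivide src tgt hst n).AdjVia (Sigma.fst ⁻¹' S)) (.inl a) (.inl b) := by
  refine h.lift' Sum.inl fun a b ⟨e, he, hab⟩ => ?_
  have hseg := reflTransGen_subdivVertex (hst := hst) he (le_refl (n e + 1))
  rw [subdivVertex_zero, subdivVertex_last] at hseg
  rw [hst e, Sym2.eq_iff] at hab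
  rcases hab with ⟨rfl, rfl⟩ | ⟨rfl, rfl⟩
  exacts [hseg, symm hseg]

lemma reflTransGen_contractVertex {S : Set E} {x y : V ⊕ (Σ e : E, Fin (n e))}
    (q : (A.subdivide src tgt hst n).Walk x y) (hq : ∀ z ∈ q.edges, z.1 ∈ S) :
    ReflTransGen (A.AdjVia S) (contractVertex tgt x) (contractVertex tgt y) := by
  refine (q.reflTransGen_adjVia (S := Sigma.fst ⁻¹' S) hq).lift' _
    fun x z ⟨⟨e, j⟩, he, hxz⟩ => ?_
  have hends : ∀ v ∈ (A.subdivide src tgt hst n).ends ⟨e, j⟩,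
      contractVertex tgt v = src e ∨ contractVertex tgt v = tgt e := by
    intro v hv
    rw [ends_subdivide, Sym2.mem_iff] at hv
    rcases hv with rfl | rfl <;> exact contractVertex_subdivVertex e _
  have hst' : ReflTransGen (A.AdjVia S) (src e) (tgt e) := .single ⟨e, he, hst e⟩
  rcases hends x (hxz ▸ Sym2.mem_mk_left _ _) with hx | hx <;>
    rcases hends z (hxz ▸ Sym2.mem_mk_right _ _) with hz | hz <;>
    simp only [onFun, hx, hz]
  exacts [.refl, hst', symm hst', .refl]

/-- The vertex shared by the two segments has degree two and is an inner vertex of `q`. -/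
lemma mem_edges_subdivide_castSucc_iff {x y : V ⊕ (Σ e : E, Fin (n e))}
    (q : (A.subdivide src tgt hst n).Walk x y) (hq : q.IsPath) (hx : x.isLeft) (hy : y.isLeft)
    (e : E) (i : Fin (n e)) :
    ⟨e, i.castSucc⟩ ∈ q.edges ↔ ⟨e, i.succ⟩ ∈ q.edges := by
  suffices h : ⟨e, i.castSucc⟩ ∈ q.edges ∨ ⟨e, i.succ⟩ ∈ q.edges →
      ⟨e, i.castSucc⟩ ∈ q.edges ∧ ⟨e, i.succ⟩ ∈ q.edges from
    ⟨fun h' => (h (.inl h')).2, fun h' => (h (.inr h')).1⟩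
  intro hor
  have hw : .inr ⟨e, i⟩ ∈ q.support := by
    rcases hor with h | h <;> exact q.mem_support_of_mem_ends h (mem_ends_subdivide_inr.2 (by simp))
  obtain ⟨g₁, h₁, g₂, h₂, hne, hw₁, hw₂⟩ := q.exists_ne_edges_of_mem_support hq hw
    (by rintro rfl; simp at hx) (by rintro rfl; simp at hy)
  rw [mem_ends_subdivide_inr] at hw₁ hw₂
  rcases hw₁ with rfl | rfl <;> rcases hw₂ with rfl | rfl
  exacts [absurd rfl hne, ⟨h₁, h₂⟩, ⟨h₂, h₁⟩, absurd rfl hne]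

lemma mem_edges_subdivide_zero {x y : V ⊕ (Σ e : E, Fin (n e))}
    (q : (A.subdivide src tgt hst n).Walk x y) (hq : q.IsPath) (hx : x.isLeft) (hy : y.isLeft)
    {e : E} (j : Fin (n e + 1)) (hj : ⟨e, j⟩ ∈ q.edges) : ⟨e, 0⟩ ∈ q.edges := by
  induction j using Fin.induction with
  | zero => exact hj
  | succ i ih => exact ih ((mem_edges_subdivide_castSucc_iff q hq hx hy e i).2 hj)

variable {H : Multigraph V1 E1}

lemma exists_vmap_eq_inl (h3 : ∀ x, H.HasThreeEdgesAt x)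
    (m : ImmersionModel H (A.subdivide src tgt hst n)) (x : V1) : ∃ a, m.vmap x = .inl a := by
  rcases hx : m.vmap x with a | p
  · exact ⟨a, rfl⟩
  · exact absurd (hx ▸ m.hasThreeEdgesAt_vmap (h3 x)) (not_hasThreeEdgesAt_subdivide_inr p)

lemma modelsLift_subdivide : ModelsLift H A (A.subdivide src tgt hst n) Sigma.fst := by
  intro m
  obtain ⟨m', hm'⟩ := exists_immersionModel_of_reflTransGen (Sum.inl ∘ m.vmap)
    (Sum.inl_injective.comp m.vmap_inj) m.src m.tgt m.ends_eq
    (fun f => Sigma.fst ⁻¹' {e | e ∈ (m.path f).edges})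
    (fun f₁ f₂ hne => (m.disjoint_edges_path hne).preimage _)
    fun f => reflTransGen_subdivide ((m.path f).reflTransGen_adjVia fun _ => id)
  exact ⟨m', hm'.trans (Set.iUnion_subset fun f e he => ⟨f, he⟩)⟩

lemma modelsLift_of_subdivide (h3 : ∀ x, H.HasThreeEdgesAt x) :
    ModelsLift H (A.subdivide src tgt hst n) A (fun e => ⟨e, 0⟩) := by
  intro m'
  choose w hw using exists_vmap_eq_inl h3 m'
  have hleft : ∀ x, (m'.vmap x).isLeft := fun x => by simp [hw]
  obtain ⟨m, hm⟩ := exists_immersionModel_of_reflTransGen w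
    (fun a b h => m'.vmap_inj (by rw [hw, hw, h])) m'.src m'.tgt m'.ends_eq
    (fun f => (fun e => ⟨e, 0⟩) ⁻¹' {z | z ∈ (m'.path f).edges})
    (fun f₁ f₂ hne => (m'.disjoint_edges_path hne).preimage _)
    fun f => by
      simpa [hw, contractVertex] using reflTransGen_contractVertex (m'.path f)
        fun z hz => mem_edges_subdivide_zero _ (m'.path_isPath f) (hleft _) (hleft _) z.2 hz
  exact ⟨m, hm.trans (Set.iUnion_subset fun f e he => ⟨f, he⟩)⟩

theorem packNum_subdivide (h3 : ∀ x, H.HasThreeEdgesAt x) :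
    packNum H A = packNum H (A.subdivide src tgt hst n) :=
  packNum_eq_of_modelsLift modelsLift_subdivide (modelsLift_of_subdivide h3)

theorem coverNum_subdivide (h3 : ∀ x, H.HasThreeEdgesAt x) :
    coverNum H A = coverNum H (A.subdivide src tgt hst n) :=
  coverNum_eq_of_modelsLift modelsLift_subdivide (modelsLift_of_subdivide h3)
    fun _ _ h => congrArg Sigma.fst h

end Subdivision

lemma Connected.exists_mem_ends {H : Multigraph V1 E1} (hc : H.Connected) [Nonempty E1]
    (v : V1) : ∃ e, v ∈ H.ends e := by
  obtain ⟨e₀⟩ := ‹Nonempty E1›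
  induction hends : H.ends e₀ using Sym2.ind with
  | _ a b =>
    by_cases hav : a = v
    · exact ⟨e₀, hav ▸ hends ▸ Sym2.mem_mk_left _ _⟩
    · obtain ⟨p⟩ := hc.2 a v
      obtain ⟨e, -, he⟩ := p.exists_edge_end hav
      exact ⟨e, he⟩

lemma hasThreeEdgesAt_plus {H : Multigraph V1 E1} (hc : H.Connected) [Nonempty E1]
    (x : V1 ⊕ (V1 × Bool)) : H.plus.HasThreeEdgesAt x := by
  rcases x with v | ⟨v, b⟩
  · obtain ⟨e, he⟩ := hc.exists_mem_ends v
    refine ⟨.inr (.inr (v, false)), .inr (.inr (v, true)), .inl e, by simp, by simp, by simp,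
      Sym2.mem_mk_left _ _, Sym2.mem_mk_left _ _, Sym2.mem_map.2 ⟨v, he, rfl⟩⟩
  · refine ⟨.inr (.inl (v, 0)), .inr (.inl (v, 1)), .inr (.inr (v, b)), by simp, by simp, by simp,
      ?_, ?_, Sym2.mem_mk_right _ _⟩ <;> cases b <;> simp [plus]

end Multigraph

/-- For any subdivision `G'` of `G*`, `pack_{H⁺}(G*) = pack_{H⁺}(G')` and
`cover_{H⁺}(G*) = cover_{H⁺}(G')`. -/
theorem packNum_coverNum_plus_star_subdivision {V1 E1 V E : Type} [Fintype E]
    (H : Multigraph V1 E1) (G : Multigraph V E)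
    (hc : H.Connected) (he : Nonempty E1)
    (src tgt : (E ⊕ (((Σ v : V, Fin (G.mdeg v)) × Fin 2) ⊕ ((Σ v : V, Fin (G.mdeg v)) × Bool))) →
      (V ⊕ ((Σ v : V, Fin (G.mdeg v)) × Bool)))
    (hst : ∀ e, (G.star).ends e = s(src e, tgt e))
    (n : (E ⊕ (((Σ v : V, Fin (G.mdeg v)) × Fin 2) ⊕ ((Σ v : V, Fin (G.mdeg v)) × Bool))) → ℕ) :
    Multigraph.packNum H.plus G.star =
        Multigraph.packNum H.plus ((G.star).subdivide src tgt hst n) ∧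
    Multigraph.coverNum H.plus G.star =
        Multigraph.coverNum H.plus ((G.star).subdivide src tgt hst n) := by
  have h3 := Multigraph.hasThreeEdgesAt_plus hc
  exact ⟨Multigraph.packNum_subdivide h3, Multigraph.coverNum_subdivide h3⟩
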